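/- Let q = (φ^L)'(λ*) where φ^L(z) = ψ^L(z) + z and λ* > 0. Define p^L_n for n ≥ 2 by p^L_n = (1/(λ* q))(β(λ*)² 1_{n=2} + ∫₀^∞ ((yλ*)^n / n!) e^{-λ* y} Π^L(dy)), p^L_0 = p^L_1 = 0, and p^{NL}_n for n ≥ 1 by p^{NL}_n = (1/(λ* q))(λ* γ 1_{n=1} + ∫₀^∞ ((yλ*)^n / n!) e^{-λ* y} Π^{NL}(dy)), p^{NL}_0 = 0. If ψ̄(λ*) = 0 (where ψ̄ is the total-mass branching mechanism), then Σ_{n≥0} (p^L_n + p^{NL}_n) = 1. -/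

import Mathlib

/-!
Write `λ = λ*`. Expanding `e^{λy}` as a power series and summing under the integral sign (every
term is nonnegative), the local probabilities sum to
`(β λ² + ∫ (1 - e^{-λy} - λy e^{-λy}) Π^L(dy)) / (λ q)` and the non-local ones to
`(λ γ + ∫ (1 - e^{-λy}) Π^{NL}(dy)) / (λ q)`. The two numerators add up to `λ q - ψ̄(λ) = λ q`.
-/

open MeasureTheory Real Set Finset
open scoped Nat

theorem hasSum_integral_of_nonneg {α ι : Type*} [MeasurableSpace α] [Countable ι] {μ : Measure α}
    {F : ι → α → ℝ} {f : α → ℝ} (hF_meas : ∀ n, AEStronglyMeasurable (F n) μ)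
    (hF_nonneg : ∀ n, 0 ≤ᵐ[μ] F n) (hf : Integrable f μ)
    (h_lim : ∀ᵐ a ∂μ, HasSum (fun n => F n a) (f a)) :
    HasSum (fun n => ∫ a, F n a ∂μ) (∫ a, f a ∂μ) :=
  hasSum_integral_of_dominated_convergence F hF_meas
    (fun n => (hF_nonneg n).mono fun _ ha => (Real.norm_of_nonneg ha).le)
    (h_lim.mono fun _ ha => ha.summable)
    (hf.congr (h_lim.mono fun _ ha => ha.tsum_eq.symm)) h_lim

theorem hasSum_pow_div_factorial_nat_add (x : ℝ) (k : ℕ) :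
    HasSum (fun n => x ^ (n + k) / (n + k)!) (exp x - ∑ i ∈ range k, x ^ i / i !) :=
  (hasSum_nat_add_iff' k).2 (exp_eq_exp_ℝ ▸ NormedSpace.expSeries_div_hasSum_exp x)

theorem one_sub_exp_neg_nonneg {x : ℝ} (hx : 0 ≤ x) : 0 ≤ 1 - exp (-x) :=
  sub_nonneg.2 (exp_le_one_iff.2 (neg_nonpos.2 hx))

theorem one_sub_exp_neg_le (x : ℝ) : 1 - exp (-x) ≤ x := by
  linarith [one_sub_le_exp_neg x]

theorem exp_neg_sub_one_add_nonneg (x : ℝ) : 0 ≤ exp (-x) - 1 + x := by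
  linarith [one_sub_le_exp_neg x]

theorem exp_neg_sub_one_add_le_mul_one_sub_exp_neg (x : ℝ) :
    exp (-x) - 1 + x ≤ x * (1 - exp (-x)) := by
  have hinv : exp (-x) * exp x = 1 := by rw [← exp_add, neg_add_cancel, exp_zero]
  nlinarith [add_one_le_exp x, exp_pos (-x)]

section Integrability

variable {μ : Measure ℝ} {l : ℝ}

theorem integrableOn_mul_one_sub_exp_neg (hl : 0 ≤ l)
    (hμ : IntegrableOn (fun u => min u (u ^ 2)) (Ioi 0) μ) :
    IntegrableOn (fun u => u * (1 - exp (-(l * u)))) (Ioi 0) μ := by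
  refine (hμ.const_mul (max 1 l)).mono' (by fun_prop) ?_
  filter_upwards [ae_restrict_mem measurableSet_Ioi] with u (hu : 0 < u)
  have hle := one_sub_exp_neg_le (l * u)
  have hnonneg := one_sub_exp_neg_nonneg (mul_nonneg hl hu.le)
  have hexp := exp_pos (-(l * u))
  rw [Real.norm_of_nonneg (mul_nonneg hu.le hnonneg)]
  rcases le_total u 1 with hu1 | hu1
  · rw [min_eq_right (by nlinarith)]
    nlinarith [le_max_right 1 l]
  · rw [min_eq_left (by nlinarith)]
    nlinarith [le_max_left 1 l]

theorem integrableOn_exp_neg_sub_one_add (hl : 0 ≤ l)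
    (hμ : IntegrableOn (fun u => min u (u ^ 2)) (Ioi 0) μ) :
    IntegrableOn (fun u => exp (-(l * u)) - 1 + l * u) (Ioi 0) μ := by
  refine ((integrableOn_mul_one_sub_exp_neg hl hμ).const_mul l).mono' (by fun_prop) ?_
  filter_upwards with u
  rw [Real.norm_of_nonneg (exp_neg_sub_one_add_nonneg _), ← mul_assoc]
  exact exp_neg_sub_one_add_le_mul_one_sub_exp_neg _

theorem integrableOn_one_sub_exp_neg (hl : 0 ≤ l)
    (hμ : IntegrableOn (fun u => u) (Ioi 0) μ) :
    IntegrableOn (fun u => 1 - exp (-(l * u))) (Ioi 0) μ := by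
  refine (hμ.const_mul l).mono' (by fun_prop) ?_
  filter_upwards [ae_restrict_mem measurableSet_Ioi] with u (hu : 0 < u)
  rw [Real.norm_of_nonneg (one_sub_exp_neg_nonneg (mul_nonneg hl hu.le))]
  exact one_sub_exp_neg_le _

end Integrability

section PoissonSeries

variable {μ : Measure ℝ} {l : ℝ}

theorem hasSum_setIntegral_pow_div_factorial_mul_exp_neg (hl : 0 ≤ l) (k : ℕ) {g : ℝ → ℝ}
    (hg_eq : ∀ y, (exp (y * l) - ∑ i ∈ range k, (y * l) ^ i / i !) * exp (-(l * y)) = g y)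
    (hg : IntegrableOn g (Ioi 0) μ) :
    HasSum (fun n => ∫ y in Ioi 0, (y * l) ^ (n + k) / (n + k)! * exp (-(l * y)) ∂μ)
      (∫ y in Ioi 0, g y ∂μ) := by
  refine hasSum_integral_of_nonneg (fun n => by fun_prop) (fun n => ?_) hg
    (ae_of_all _ fun y => hg_eq y ▸ (hasSum_pow_div_factorial_nat_add _ k).mul_right _)
  filter_upwards [ae_restrict_mem measurableSet_Ioi] with y (hy : 0 < y)
  have := mul_nonneg hy.le hl
  positivity

theorem exp_mul_exp_neg_mul_comm (y l : ℝ) : exp (y * l) * exp (-(l * y)) = 1 := by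
  rw [← exp_add, mul_comm, add_neg_cancel, exp_zero]

theorem hasSum_setIntegral_pow_add_two_div_factorial_mul_exp_neg (hl : 0 ≤ l)
    (hμ : IntegrableOn (fun u => min u (u ^ 2)) (Ioi 0) μ) :
    HasSum (fun n => ∫ y in Ioi 0, (y * l) ^ (n + 2) / (n + 2)! * exp (-(l * y)) ∂μ)
      (l * (∫ u in Ioi 0, u * (1 - exp (-(l * u))) ∂μ) -
        ∫ u in Ioi 0, (exp (-(l * u)) - 1 + l * u) ∂μ) := by
  have h₁ := (integrableOn_mul_one_sub_exp_neg hl hμ).const_mul l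
  have h₂ := integrableOn_exp_neg_sub_one_add hl hμ
  rw [← integral_const_mul, ← integral_sub h₁ h₂]
  refine hasSum_setIntegral_pow_div_factorial_mul_exp_neg hl 2 (fun y => ?_) (h₁.sub h₂)
  simp only [sum_range_succ, sum_range_zero, zero_add, pow_zero, pow_one, Nat.factorial_zero,
    Nat.factorial_one, Nat.cast_one, div_one]
  linear_combination exp_mul_exp_neg_mul_comm y l

theorem hasSum_setIntegral_pow_add_one_div_factorial_mul_exp_neg (hl : 0 ≤ l)
    (hμ : IntegrableOn (fun u => u) (Ioi 0) μ) :
    HasSum (fun n => ∫ y in Ioi 0, (y * l) ^ (n + 1) / (n + 1)! * exp (-(l * y)) ∂μ)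
      (∫ u in Ioi 0, (1 - exp (-(l * u))) ∂μ) := by
  refine hasSum_setIntegral_pow_div_factorial_mul_exp_neg hl 1 (fun y => ?_)
    (integrableOn_one_sub_exp_neg hl hμ)
  simp only [sum_range_one, pow_zero, Nat.factorial_zero, Nat.cast_one, div_one]
  linear_combination exp_mul_exp_neg_mul_comm y l

end PoissonSeries

theorem hasSum_of_eq_mul_ite_add {p I : ℕ → ℝ} {k : ℕ} {c a S : ℝ}
    (hp_lt : ∀ n < k, p n = 0)
    (hp : ∀ n, k ≤ n → p n = c * (a * (if n = k then 1 else 0) + I n))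
    (hI : HasSum (fun n => I (n + k)) S) :
    HasSum p (c * (a + S)) := by
  have hshift : (fun n => p (n + k)) = fun n => c * ((if n = 0 then a else 0) + I (n + k)) := by
    funext n
    rw [hp (n + k) (Nat.le_add_left k n)]
    simp
  rw [← hasSum_nat_add_iff' k, sum_eq_zero fun i hi => hp_lt i (mem_range.1 hi), sub_zero, hshift]
  exact ((hasSum_ite_eq 0 a).add hI).mul_left c

theorem offspring_probabilities_sum_to_one_general
    (α β γ lstar q : ℝ) (hlstar : 0 < lstar) (hq : 0 < q)
    (PiL PiNL : Measure ℝ)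
    (hPiL : IntegrableOn (fun u => min u (u ^ 2)) (Set.Ioi 0) PiL)
    (hPiNL : IntegrableOn (fun u => u) (Set.Ioi 0) PiNL)
    -- `q = (φ^L)'(λ*) = (ψ^L)'(λ*) + 1`
    (hq_def : q = α + 2 * β * lstar +
      (∫ u in Set.Ioi (0 : ℝ), u * (1 - Real.exp (-(lstar * u))) ∂PiL) + 1)
    -- `ψ̄(λ*) = 0`
    (hroot : (α + 1) * lstar + β * lstar ^ 2 +
      (∫ u in Set.Ioi (0 : ℝ), (Real.exp (-(lstar * u)) - 1 + lstar * u) ∂PiL) -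
      γ * lstar - (∫ u in Set.Ioi (0 : ℝ), (1 - Real.exp (-(lstar * u))) ∂PiNL) = 0)
    (pL pNL : ℕ → ℝ)
    (hpL0 : pL 0 = 0) (hpL1 : pL 1 = 0)
    (hpL : ∀ n : ℕ, 2 ≤ n → pL n = (1 / (lstar * q)) *
      (β * lstar ^ 2 * (if n = 2 then 1 else 0) +
        ∫ y in Set.Ioi (0 : ℝ), ((y * lstar) ^ n / n.factorial) * Real.exp (-(lstar * y)) ∂PiL))
    (hpNL0 : pNL 0 = 0)
    (hpNL : ∀ n : ℕ, 1 ≤ n → pNL n = (1 / (lstar * q)) *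
      (lstar * γ * (if n = 1 then 1 else 0) +
        ∫ y in Set.Ioi (0 : ℝ), ((y * lstar) ^ n / n.factorial) * Real.exp (-(lstar * y)) ∂PiNL)) :
    ∑' n : ℕ, (pL n + pNL n) = 1 := by
  have hL := hasSum_of_eq_mul_ite_add (fun n hn => by interval_cases n <;> assumption) hpL
    (hasSum_setIntegral_pow_add_two_div_factorial_mul_exp_neg hlstar.le hPiL)
  have hNL := hasSum_of_eq_mul_ite_add (fun n hn => by interval_cases n; exact hpNL0) hpNL
    (hasSum_setIntegral_pow_add_one_div_factorial_mul_exp_neg hlstar.le hPiNL)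
  rw [(hL.add hNL).tsum_eq, ← mul_add, one_div_mul_eq_div, div_eq_one_iff_eq (by positivity)]
  linear_combination (-lstar) * hq_def - hroot

/-- The backbone local and non-local offspring probabilities sum to one when `λ*` is a
root of the total-mass branching mechanism `ψ̄`. -/
theorem offspring_probabilities_sum_to_one
    (α β γ lstar q : ℝ) (hβ : 0 ≤ β) (hγ : 0 ≤ γ) (hlstar : 0 < lstar) (hq : 0 < q)
    (PiL PiNL : Measure ℝ)
    (hPiL : IntegrableOn (fun u => min u (u ^ 2)) (Set.Ioi 0) PiL)
    (hPiNL : IntegrableOn (fun u => u) (Set.Ioi 0) PiNL)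
    (hconstraint : γ + ∫ u in Set.Ioi (0 : ℝ), u ∂PiNL ≤ 1)
    -- `q = (φ^L)'(λ*) = (ψ^L)'(λ*) + 1`
    (hq_def : q = α + 2 * β * lstar +
      (∫ u in Set.Ioi (0 : ℝ), u * (1 - Real.exp (-(lstar * u))) ∂PiL) + 1)
    -- `ψ̄(λ*) = 0`
    (hroot : (α + 1) * lstar + β * lstar ^ 2 +
      (∫ u in Set.Ioi (0 : ℝ), (Real.exp (-(lstar * u)) - 1 + lstar * u) ∂PiL) -
      γ * lstar - (∫ u in Set.Ioi (0 : ℝ), (1 - Real.exp (-(lstar * u))) ∂PiNL) = 0)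
    (pL pNL : ℕ → ℝ)
    (hpL0 : pL 0 = 0) (hpL1 : pL 1 = 0)
    (hpL : ∀ n : ℕ, 2 ≤ n → pL n = (1 / (lstar * q)) *
      (β * lstar ^ 2 * (if n = 2 then 1 else 0) +
        ∫ y in Set.Ioi (0 : ℝ), ((y * lstar) ^ n / n.factorial) * Real.exp (-(lstar * y)) ∂PiL))
    (hpNL0 : pNL 0 = 0)
    (hpNL : ∀ n : ℕ, 1 ≤ n → pNL n = (1 / (lstar * q)) *
      (lstar * γ * (if n = 1 then 1 else 0) +
        ∫ y in Set.Ioi (0 : ℝ), ((y * lstar) ^ n / n.factorial) * Real.exp (-(lstar * y)) ∂PiNL)) :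
    ∑' n : ℕ, (pL n + pNL n) = 1 :=
  offspring_probabilities_sum_to_one_general α β γ lstar q hlstar hq PiL PiNL hPiL hPiNL hq_def
    hroot pL pNL hpL0 hpL1 hpL hpNL0 hpNL
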